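/- Let p and ℓ be distinct primes, and write ℓ = ω·r^{p^n} in ℤ_p^× where ω is a torsion unit (ω^{p−1} = 1 if p is odd, ω ∈ {±1} if p = 2), n is a natural number, and r is a topological generator of U_1. Then the image of the evaluation homomorphism ψ ↦ ψ(ℓ), from the group of continuous group homomorphisms ℤ_p^× → (ℤ_p, +) to ℤ_p, is exactly the subgroup p^n·ℤ_p; in particular, the cokernel of this evaluation homomorphism is cyclic of order p^n. -/

import Mathlib

/-- For a prime `p`, the subgroup `U₁` of `ℤ_[p]ˣ` of units congruent to `1` modulo `p`
(if `p` is odd) or modulo `4` (if `p = 2`), defined as the kernel of the reduction map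
`ℤ_[p]ˣ → (ZMod (p ^ k))ˣ` with `k = 2` if `p = 2` and `k = 1` otherwise. -/
noncomputable def U1 (p : ℕ) [Fact p.Prime] : Subgroup ℤ_[p]ˣ :=
  (Units.map ((PadicInt.toZModPow (if p = 2 then 2 else 1) :
    ℤ_[p] →+* ZMod (p ^ (if p = 2 then 2 else 1))) :
    ℤ_[p] →* ZMod (p ^ (if p = 2 then 2 else 1)))).ker

/-! Every continuous homomorphism `ψ : ℤ_[p]ˣ → ℤ_[p]` kills the torsion unit `ω`, so
`ψ (ω r^{p^n}) = p^n ψ r`. Conversely, on `U₁` one has `‖u^k - 1‖ = ‖k‖ ‖u - 1‖`, so `k ↦ r^k` is a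
dilation of `ℤ` with its `p`-adic metric; its inverse is uniformly continuous and extends to a
continuous logarithm `U₁ → ℤ_[p]` sending `r` to `1`. Composing it with a continuous retraction
`ℤ_[p]ˣ → U₁` that kills `ω` (`u ↦ u^{p-1}` for odd `p`, `u ↦ ±u` for `p = 2`) and rescaling by a
`p`-adic unit realises every multiple of `p^n`. -/

open Set Function
open scoped NNReal

theorem UniformContinuousOn.exists_continuousOn_closure_eqOn {α β : Type*} [UniformSpace α]
    [UniformSpace β] [CompleteSpace β] [T0Space β] {f : α → β} {s : Set α}
    (hf : UniformContinuousOn f s) : ∃ g : α → β, ContinuousOn g (closure s) ∧ EqOn g f s := by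
  classical
  set t : Set (closure s) := Subtype.val ⁻¹' s
  have ht : Dense t := Subtype.dense_iff.mpr <| by
    rw [Subtype.image_preimage_coe, inter_eq_right.mpr subset_closure]
  have hft : UniformContinuous fun x : t => f x.1.1 :=
    (uniformContinuousOn_iff_restrict.mp hf).comp
      ((uniformContinuous_subtype_val.comp uniformContinuous_subtype_val).subtype_mk
        fun x : t => x.2)
  refine ⟨fun x => if hx : x ∈ closure s then ht.extend (fun x : t => f x.1.1) ⟨x, hx⟩ else f x,
    ?_, fun x hx => ?_⟩
  · rw [continuousOn_iff_continuous_domRestrict]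
    exact (ht.uniformContinuous_extend hft).continuous.congr fun x => by simp [x.2]
  · simp only [dif_pos (subset_closure hx)]
    exact ht.extend_of_ind hft ⟨⟨x, subset_closure hx⟩, hx⟩

theorem exists_continuousOn_closure_range_comp_eq {ι X Y : Type*} [Nonempty ι]
    [PseudoMetricSpace X] [MetricSpace Y] [CompleteSpace Y] {s : ι → X} {j : ι → Y} {K : ℝ≥0}
    (h : ∀ a b, dist (j a) (j b) ≤ K * dist (s a) (s b)) :
    ∃ F : X → Y, ContinuousOn F (closure (range s)) ∧ F ∘ s = j := by
  have hj : ∀ a, j (invFun s (s a)) = j a := fun a =>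
    dist_le_zero.mp (by simpa [invFun_eq ⟨a, rfl⟩] using h (invFun s (s a)) a)
  have hlip : LipschitzOnWith K (j ∘ invFun s) (range s) := .of_dist_le_mul <| by
    rintro _ ⟨a, rfl⟩ _ ⟨b, rfl⟩
    simpa [hj] using h a b
  obtain ⟨F, hF, hFj⟩ := hlip.uniformContinuousOn.exists_continuousOn_closure_eqOn
  exact ⟨F, hF, funext fun a => (hFj ⟨a, rfl⟩).trans (hj a)⟩

theorem map_mul_of_dense_zpowers {G A : Type*} [Group G] [TopologicalSpace G] [ContinuousMul G]
    [Add A] [TopologicalSpace A] [ContinuousAdd A] [T2Space A] {g : G}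
    (hg : Dense (Subgroup.zpowers g : Set G)) {φ : G → A} (hφ : Continuous φ)
    (h : ∀ a b : ℤ, φ (g ^ a * g ^ b) = φ (g ^ a) + φ (g ^ b)) (x y : G) :
    φ (x * y) = φ x + φ y := by
  have := Continuous.ext_on (hg.prod hg) (hφ.comp continuous_mul)
    ((hφ.comp continuous_fst).add (hφ.comp continuous_snd)) <| by
    rintro ⟨_, _⟩ ⟨⟨a, rfl⟩, ⟨b, rfl⟩⟩
    exact h a b
  exact congrFun this (x, y)

theorem ne_one_of_dense_zpowers {G : Type*} [Group G] [TopologicalSpace G] [T1Space G]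
    [Nontrivial G] {g : G} (hg : Dense (Subgroup.zpowers g : Set G)) : g ≠ 1 := by
  rintro rfl
  obtain ⟨x, hx⟩ := exists_ne (1 : G)
  have : closure ({1} : Set G) = univ := by simpa using hg.closure_eq
  rw [closure_singleton] at this
  exact hx (this.symm ▸ mem_univ x : x ∈ ({1} : Set G))

theorem exists_continuous_retraction_of_isClopen {G : Type*} [CommGroup G] [TopologicalSpace G]
    [ContinuousMul G] {H : Subgroup G} (hH : IsClopen (H : Set G)) {t : G} (ht : t ^ 2 = 1)
    (htH : t ∉ H) (hG : ∀ u, u ∈ H ∨ t * u ∈ H) :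
    ∃ π : G →* H, Continuous π ∧ π t = 1 ∧ ∀ u : H, π u = u := by
  classical
  have hmem : ∀ u, (if u ∈ H then u else t * u) ∈ H := fun u => by
    split_ifs with hu
    exacts [hu, (hG u).resolve_left hu]
  have htt : t * t = 1 := by rw [← sq, ht]
  let π : G →* H :=
    { toFun := fun u => ⟨_, hmem u⟩
      map_one' := by simp [H.one_mem]
      map_mul' := fun a b => by
        apply Subtype.ext
        by_cases ha : a ∈ H <;> by_cases hb : b ∈ H
        · simp [ha, hb, H.mul_mem ha hb]
        · simp [ha, hb, H.mul_mem_cancel_left ha, mul_left_comm t a b]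
        · simp [ha, hb, H.mul_mem_cancel_right hb, mul_assoc]
        · have hab : a * b = t * a * (t * b) := by
            rw [mul_mul_mul_comm, htt, one_mul]
          simp [ha, hb, hab ▸ H.mul_mem ((hG a).resolve_left ha) ((hG b).resolve_left hb), ← hab] }
  refine ⟨π, ?_, Subtype.ext ?_, fun u => Subtype.ext (if_pos u.2)⟩
  · exact (Continuous.if (fun a ha => by simp [hH.frontier_eq] at ha) continuous_id
      (continuous_const.mul continuous_id)).subtype_mk hmem
  · simp [π, htH, htt]

section AddValued

variable {M A : Type*} [Monoid M] [AddMonoid A] [IsLeftCancelAdd A] {ψ : M → A}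

theorem map_pow_of_map_mul (hψ : ∀ a b, ψ (a * b) = ψ a + ψ b) (x : M) (m : ℕ) :
    ψ (x ^ m) = m • ψ x := by
  induction m with
  | zero => simpa using left_eq_add.mp (by simpa using hψ 1 1 : ψ 1 = ψ 1 + ψ 1)
  | succ m ih => rw [pow_succ, hψ, ih, succ_nsmul]

theorem map_eq_zero_of_isOfFinOrder [IsAddTorsionFree A] (hψ : ∀ a b, ψ (a * b) = ψ a + ψ b)
    {x : M} (hx : IsOfFinOrder x) : ψ x = 0 := by
  obtain ⟨m, hm, hxm⟩ := isOfFinOrder_iff_pow_eq_one.mp hx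
  apply nsmul_right_injective hm.ne'
  simp only [← map_pow_of_map_mul hψ, hxm, smul_zero]
  simpa using map_pow_of_map_mul hψ 1 0

end AddValued

theorem IsUltrametricDist.norm_eq_of_norm_sub_lt {S : Type*} [SeminormedAddGroup S]
    [IsUltrametricDist S] {x y : S} (h : ‖x - y‖ < ‖y‖) : ‖x‖ = ‖y‖ := by
  have := norm_add_eq_max_of_norm_ne_norm h.ne
  rwa [sub_add_cancel, max_eq_right h.le] at this

namespace PadicInt

variable {p : ℕ} [Fact p.Prime]

theorem norm_le_of_dvd {x y : ℤ_[p]} (h : x ∣ y) : ‖y‖ ≤ ‖x‖ := by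
  obtain ⟨c, rfl⟩ := h
  rw [norm_mul]
  exact mul_le_of_le_one_right (norm_nonneg x) (norm_le_one c)

theorem norm_pow_sub_one_of_not_dvd {x : ℤ_[p]} (hx : ‖x - 1‖ < 1) {k : ℕ} (hk : ¬p ∣ k) :
    ‖x ^ k - 1‖ = ‖x - 1‖ := by
  have hk1 : ‖(k : ℤ_[p])‖ = 1 :=
    norm_natCast_eq_one_iff.mpr ((Nat.Prime.coprime_iff_not_dvd Fact.out).mpr hk)
  have hsum : ‖∑ i ∈ Finset.range k, x ^ i - k‖ < ‖(k : ℤ_[p])‖ := by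
    rw [hk1]
    refine (norm_le_of_dvd ?_).trans_lt hx
    rw [show ∑ i ∈ Finset.range k, x ^ i - k = ∑ i ∈ Finset.range k, (x ^ i - 1) by
      simp [Finset.sum_sub_distrib]]
    exact Finset.dvd_sum fun i _ => sub_one_dvd_pow_sub_one x i
  rw [← geom_sum_mul, norm_mul, IsUltrametricDist.norm_eq_of_norm_sub_lt hsum, hk1, one_mul]

theorem norm_pow_prime_sub_one {x : ℤ_[p]} (hx : (p : ℤ_[p]) ^ (if p = 2 then 2 else 1) ∣ x - 1) :
    ‖x ^ p - 1‖ = ‖(p : ℤ_[p])‖ * ‖x - 1‖ := by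
  -- `x ^ p - 1 = (x - 1) * ∑ x ^ i`, and the sum differs from `p` by at most `‖p‖²`.
  suffices hsum : ‖∑ i ∈ Finset.range p, x ^ i - p‖ < ‖(p : ℤ_[p])‖ by
    rw [← geom_sum_mul, norm_mul, IsUltrametricDist.norm_eq_of_norm_sub_lt hsum]
  have hp2 : ‖(p : ℤ_[p]) ^ 2‖ < ‖(p : ℤ_[p])‖ := by
    rw [norm_pow, norm_p, sq]
    exact mul_lt_of_lt_one_left (by simp [(Fact.out : p.Prime).pos])
      (inv_lt_one_of_one_lt₀ (mod_cast (Fact.out : p.Prime).one_lt))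
  rcases eq_or_ne p 2 with rfl | hp
  · calc ‖∑ i ∈ Finset.range 2, x ^ i - (2 : ℕ)‖ = ‖x - 1‖ := by
          simp only [Finset.sum_range_succ, Finset.range_one, Finset.sum_singleton, pow_zero,
            pow_one, Nat.cast_ofNat]
          ring_nf
      _ ≤ ‖((2 : ℕ) : ℤ_[2]) ^ 2‖ := norm_le_of_dvd (by simpa using hx)
      _ < _ := hp2
  · obtain ⟨b, hb⟩ := (pow_one (p : ℤ_[p])) ▸ if_neg hp ▸ hx
    have := odd_sq_dvd_geom_sum₂_sub (1 : ℤ_[p]) b ((Fact.out : p.Prime).odd_of_ne_two hp)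
    simp only [one_pow, mul_one, ← hb, add_sub_cancel] at this
    exact (norm_le_of_dvd this).trans_lt hp2

theorem norm_pow_sub_one {x : ℤ_[p]} (hx : (p : ℤ_[p]) ^ (if p = 2 then 2 else 1) ∣ x - 1)
    (k : ℕ) : ‖x ^ k - 1‖ = ‖(k : ℤ_[p])‖ * ‖x - 1‖ := by
  rcases eq_or_ne k 0 with rfl | hk
  · simp
  obtain ⟨e, m, hm, rfl⟩ := Nat.exists_eq_pow_mul_and_not_dvd hk p (Fact.out : p.Prime).ne_one
  have hpow : ∀ e, ‖x ^ p ^ e - 1‖ = ‖(p : ℤ_[p])‖ ^ e * ‖x - 1‖ := by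
    intro e
    induction e with
    | zero => simp
    | succ e ih =>
      rw [pow_succ, pow_mul, norm_pow_prime_sub_one (hx.trans (sub_one_dvd_pow_sub_one x _)), ih,
        pow_succ]
      ring
  have hlt : ‖x ^ p ^ e - 1‖ < 1 := by
    refine (norm_le_of_dvd (hx.trans (sub_one_dvd_pow_sub_one x _))).trans_lt ?_
    rw [norm_pow, norm_p]
    exact pow_lt_one₀ (by positivity) (inv_lt_one_of_one_lt₀ (mod_cast (Fact.out : p.Prime).one_lt))
      (by split_ifs <;> norm_num)
  rw [pow_mul, norm_pow_sub_one_of_not_dvd hlt hm, hpow, Nat.cast_mul, Nat.cast_pow, norm_mul,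
    norm_pow, norm_natCast_eq_one_iff.mpr ((Nat.Prime.coprime_iff_not_dvd Fact.out).mpr hm),
    mul_one]

theorem norm_inv_sub_one (u : ℤ_[p]ˣ) :
    ‖((u⁻¹ : ℤ_[p]ˣ) : ℤ_[p]) - 1‖ = ‖(u : ℤ_[p]) - 1‖ := by
  have : ((u⁻¹ : ℤ_[p]ˣ) : ℤ_[p]) - 1 = ((u⁻¹ : ℤ_[p]ˣ) : ℤ_[p]) * (1 - u) := by
    rw [mul_sub, mul_one, Units.inv_mul]
  rw [this, norm_mul, norm_units, one_mul, norm_sub_rev]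

variable (p) in
noncomputable def quotientSpanPPowRingEquiv (n : ℕ) :
    ℤ_[p] ⧸ Ideal.span {(p : ℤ_[p]) ^ n} ≃+* ZMod (p ^ n) :=
  (Ideal.quotEquivOfEq (ker_toZModPow n).symm).trans
    (RingHom.quotientKerEquivOfSurjective (ZMod.ringHom_surjective _))

end PadicInt

section U1

open PadicInt

variable {p : ℕ} [Fact p.Prime]

theorem mem_U1_iff_dvd (u : ℤ_[p]ˣ) :
    u ∈ U1 p ↔ (p : ℤ_[p]) ^ (if p = 2 then 2 else 1) ∣ (u : ℤ_[p]) - 1 := by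
  rw [U1, MonoidHom.mem_ker, Units.ext_iff, ← Ideal.mem_span_singleton, ← ker_toZModPow,
    RingHom.mem_ker, map_sub, map_one, sub_eq_zero]
  rfl

theorem norm_zpow_sub_one_of_mem_U1 {u : ℤ_[p]ˣ} (hu : u ∈ U1 p) (k : ℤ) :
    ‖((u ^ k : ℤ_[p]ˣ) : ℤ_[p]) - 1‖ = ‖(k : ℤ_[p])‖ * ‖(u : ℤ_[p]) - 1‖ := by
  obtain ⟨m, rfl | rfl⟩ := Int.eq_nat_or_neg k
  · rw [zpow_natCast, Units.val_pow_eq_pow_val, norm_pow_sub_one ((mem_U1_iff_dvd u).mp hu),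
      Int.cast_natCast]
  · rw [zpow_neg, norm_inv_sub_one, zpow_natCast, Units.val_pow_eq_pow_val,
      norm_pow_sub_one ((mem_U1_iff_dvd u).mp hu), Int.cast_neg, norm_neg, Int.cast_natCast]

theorem isClopen_U1 : IsClopen (U1 p : Set ℤ_[p]ˣ) := by
  have : (U1 p : Set ℤ_[p]ˣ) = Units.val ⁻¹'
      Metric.closedBall 1 ((p : ℝ) ^ (-((if p = 2 then 2 else 1 : ℕ) : ℤ))) := by
    ext u
    rw [SetLike.mem_coe, mem_U1_iff_dvd, mem_preimage, Metric.mem_closedBall, dist_eq_norm,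
      norm_le_pow_iff_mem_span_pow, Ideal.mem_span_singleton]
  rw [this]
  exact (IsUltrametricDist.isClopen_closedBall _
    (zpow_pos (mod_cast (Fact.out : p.Prime).pos) _).ne').preimage Units.continuous_val

instance : Nontrivial (U1 p) := by
  have hp : ‖(p : ℤ_[p]) ^ 2‖ < 1 := by
    rw [norm_pow, norm_p]
    exact pow_lt_one₀ (by positivity)
      (inv_lt_one_of_one_lt₀ (mod_cast (Fact.out : p.Prime).one_lt)) two_ne_zero
  have hunit : IsUnit (1 + (p : ℤ_[p]) ^ 2) := isUnit_iff.mpr <| by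
    rw [← norm_one (α := ℤ_[p])]
    exact IsUltrametricDist.norm_eq_of_norm_sub_lt (by simpa using hp)
  have hmem : hunit.unit ∈ U1 p := by
    rw [mem_U1_iff_dvd, IsUnit.unit_spec, add_sub_cancel_left]
    exact pow_dvd_pow _ (by split_ifs <;> norm_num)
  refine ⟨⟨⟨_, hmem⟩, 1, fun h => ?_⟩⟩
  have : (p : ℤ_[p]) ^ 2 = 0 := by
    simpa using congrArg (fun u : U1 p => ((u : ℤ_[p]ˣ) : ℤ_[p])) h
  exact (Fact.out : p.Prime).ne_zero (by exact_mod_cast pow_eq_zero_iff two_ne_zero |>.mp this)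

theorem mem_U1_two_or_neg_mem (u : ℤ_[2]ˣ) : u ∈ U1 2 ∨ -u ∈ U1 2 := by
  have h : ∀ v : (ZMod (2 ^ (if 2 = 2 then 2 else 1)))ˣ, v = 1 ∨ -v = 1 := by decide
  simpa only [U1, MonoidHom.mem_ker, Units.map_neg] using h _

theorem neg_one_not_mem_U1_two : (-1 : ℤ_[2]ˣ) ∉ U1 2 := by
  have h : (-1 : (ZMod (2 ^ (if 2 = 2 then 2 else 1)))ˣ) ≠ 1 := by decide
  simpa only [U1, MonoidHom.mem_ker, Units.map_neg_one] using h

theorem exists_continuous_projection_U1 {ω : ℤ_[p]ˣ} (hω₁ : p ≠ 2 → ω ^ (p - 1) = 1)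
    (hω₂ : p = 2 → ω = 1 ∨ ω = -1) :
    ∃ (π : ℤ_[p]ˣ →* U1 p) (q : ℕ), Continuous π ∧ ¬p ∣ q ∧ π ω = 1 ∧
      ∀ u : U1 p, π u = u ^ q := by
  rcases eq_or_ne p 2 with rfl | hp
  · obtain ⟨π, hπ, hπt, hπU⟩ := exists_continuous_retraction_of_isClopen isClopen_U1 (by simp)
      neg_one_not_mem_U1_two fun u => by simpa using mem_U1_two_or_neg_mem u
    refine ⟨π, 1, hπ, by norm_num, ?_, by simpa using hπU⟩
    rcases hω₂ rfl with rfl | rfl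
    exacts [map_one π, hπt]
  · have htot : (p ^ (if p = 2 then 2 else 1)).totient = p - 1 := by
      rw [if_neg hp, pow_one, Nat.totient_prime Fact.out]
    have hmem : ∀ u : ℤ_[p]ˣ, u ^ (p - 1) ∈ U1 p := fun u => by
      rw [U1, MonoidHom.mem_ker, map_pow, ← htot, ZMod.pow_totient]
    refine ⟨(powMonoidHom (p - 1)).codRestrict (U1 p) hmem, p - 1,
      (continuous_pow (p - 1)).subtype_mk hmem, ?_, Subtype.ext (hω₁ hp), fun u => rfl⟩
    have := (Fact.out : p.Prime).two_le
    exact fun h => absurd (Nat.le_of_dvd (by omega) h) (by omega)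

theorem exists_continuous_log_of_dense_zpowers {r : U1 p}
    (hr : Dense (Subgroup.zpowers r : Set (U1 p))) :
    ∃ φ : U1 p → ℤ_[p], Continuous φ ∧ (∀ a b, φ (a * b) = φ a + φ b) ∧
      ∀ k : ℤ, φ (r ^ k) = k := by
  set v : U1 p → ℤ_[p] := fun u => ((u : ℤ_[p]ˣ) : ℤ_[p])
  have hv : Continuous v := Units.continuous_val.comp continuous_subtype_val
  have hr1 : ‖v r - 1‖ ≠ 0 := by
    simpa [v, sub_eq_zero, Units.val_eq_one] using ne_one_of_dense_zpowers hr
  have hdist : ∀ a b : ℤ, dist (a : ℤ_[p]) b ≤ ‖v r - 1‖₊⁻¹ * dist (v (r ^ a)) (v (r ^ b)) := by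
    intro a b
    have hvr : ∀ k : ℤ, v (r ^ k) = (((r : ℤ_[p]ˣ) ^ k : ℤ_[p]ˣ) : ℤ_[p]) := fun k => by simp [v]
    have hsplit : v (r ^ a) - v (r ^ b) = v (r ^ b) * (v (r ^ (a - b)) - 1) := by
      simp only [hvr, mul_sub, mul_one, ← Units.val_mul, ← zpow_add, add_sub_cancel]
    rw [dist_eq_norm, dist_eq_norm, hsplit, norm_mul, hvr b, PadicInt.norm_units, one_mul, hvr,
      norm_zpow_sub_one_of_mem_U1 r.2, Int.cast_sub, NNReal.coe_inv, coe_nnnorm, mul_comm ‖_‖]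
    exact (inv_mul_cancel_left₀ hr1 _).ge
  obtain ⟨F, hF, hFv⟩ := exists_continuousOn_closure_range_comp_eq hdist
  have hφr : ∀ k : ℤ, F (v (r ^ k)) = k := congrFun hFv
  have hvF : ∀ u, v u ∈ closure (range fun k : ℤ => v (r ^ k)) := fun u =>
    closure_mono (by rintro _ ⟨_, ⟨k, rfl⟩, rfl⟩; exact ⟨k, rfl⟩)
      (image_closure_subset_closure_image hv ⟨u, hr u, rfl⟩)
  have hφ := hF.comp_continuous hv hvF
  refine ⟨F ∘ v, hφ, map_mul_of_dense_zpowers hr hφ fun a b => ?_, hφr⟩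
  simp only [comp_apply, ← zpow_add, hφr, Int.cast_add]

theorem exists_continuous_log_units_of_dense_zpowers {ω : ℤ_[p]ˣ}
    (hω₁ : p ≠ 2 → ω ^ (p - 1) = 1) (hω₂ : p = 2 → ω = 1 ∨ ω = -1) {r : U1 p}
    (hr : Dense (Subgroup.zpowers r : Set (U1 p))) :
    ∃ ψ : ℤ_[p]ˣ → ℤ_[p], Continuous ψ ∧ (∀ a b, ψ (a * b) = ψ a + ψ b) ∧ ψ ω = 0 ∧ ψ r = 1 := by
  obtain ⟨φ, hφc, hφ, hφr⟩ := exists_continuous_log_of_dense_zpowers hr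
  obtain ⟨π, q, hπc, hq, hπω, hπU⟩ := exists_continuous_projection_U1 hω₁ hω₂
  obtain ⟨w, hw⟩ : IsUnit (q : ℤ_[p]) := isUnit_iff.mpr
    (norm_natCast_eq_one_iff.mpr ((Nat.Prime.coprime_iff_not_dvd Fact.out).mpr hq))
  refine ⟨fun u => w⁻¹ * φ (π u), by fun_prop, fun a b => by simp [hφ, mul_add], ?_, ?_⟩
  · simpa [hπω] using hφr 0
  · show w⁻¹ * φ (π r) = 1
    rw [hπU, ← zpow_natCast, hφr, Int.cast_natCast, ← hw, Units.inv_mul]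

end U1

theorem stmt10_general (p : ℕ) [Fact p.Prime]
    (ω : ℤ_[p]ˣ) (hω₁ : p ≠ 2 → ω ^ (p - 1) = 1) (hω₂ : p = 2 → ω = 1 ∨ ω = -1)
    (n : ℕ) (r : U1 p)
    (hr : Dense (Subgroup.zpowers r : Set (U1 p))) :
    (∀ y : ℤ_[p],
      (∃ ψ : ℤ_[p]ˣ → ℤ_[p], Continuous ψ ∧ (∀ a b : ℤ_[p]ˣ, ψ (a * b) = ψ a + ψ b) ∧
        ψ (ω * (r : ℤ_[p]ˣ) ^ (p ^ n)) = y) ↔ (p : ℤ_[p]) ^ n ∣ y) ∧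
    Nonempty ((ℤ_[p] ⧸ Ideal.span {(p : ℤ_[p]) ^ n}) ≃+ ZMod (p ^ n)) := by
  have hω : IsOfFinOrder ω := by
    rcases eq_or_ne p 2 with rfl | hp
    · rcases hω₂ rfl with rfl | rfl <;> exact isOfFinOrder_iff_pow_eq_one.mpr ⟨2, two_pos, by simp⟩
    · exact isOfFinOrder_iff_pow_eq_one.mpr
        ⟨p - 1, Nat.sub_pos_of_lt (Fact.out : p.Prime).one_lt, hω₁ hp⟩
  refine ⟨fun y => ⟨?_, ?_⟩, ⟨(PadicInt.quotientSpanPPowRingEquiv p n).toAddEquiv⟩⟩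
  · rintro ⟨ψ, -, hψ, rfl⟩
    refine ⟨ψ r, ?_⟩
    rw [hψ, map_eq_zero_of_isOfFinOrder hψ hω, zero_add, map_pow_of_map_mul hψ, nsmul_eq_mul,
      Nat.cast_pow]
  · rintro ⟨c, rfl⟩
    obtain ⟨ψ, hψc, hψ, hψω, hψr⟩ := exists_continuous_log_units_of_dense_zpowers hω₁ hω₂ hr
    refine ⟨fun u => c * ψ u, by fun_prop, fun a b => by simp [hψ, mul_add], ?_⟩
    simp [hψ, hψω, map_pow_of_map_mul hψ, hψr, mul_comm]

/-- Let `p ≠ ℓ` be primes and write `ℓ = ω · r^{p^n}` in `ℤ_pˣ` with `ω` a torsion unit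
(`ω^{p-1} = 1` for odd `p`, `ω = ±1` for `p = 2`), `n : ℕ`, and `r` a topological
generator of `U₁`.  Then the image of the evaluation map `ψ ↦ ψ(ℓ)`, from continuous
group homomorphisms `ℤ_pˣ → (ℤ_p, +)` to `ℤ_p`, is exactly `p^n · ℤ_p`; in particular the
cokernel of the evaluation map is cyclic of order `p^n`. -/
theorem stmt10 (p ℓ : ℕ) [Fact p.Prime] (hℓ : ℓ.Prime) (hne : ℓ ≠ p)
    (ω : ℤ_[p]ˣ) (hω₁ : p ≠ 2 → ω ^ (p - 1) = 1) (hω₂ : p = 2 → ω = 1 ∨ ω = -1)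
    (n : ℕ) (r : U1 p)
    (hr : Dense (Subgroup.zpowers r : Set (U1 p)))
    (hfac : (ℓ : ℤ_[p]) = ((ω * (r : ℤ_[p]ˣ) ^ (p ^ n) : ℤ_[p]ˣ) : ℤ_[p])) :
    (∀ y : ℤ_[p],
      (∃ ψ : ℤ_[p]ˣ → ℤ_[p], Continuous ψ ∧ (∀ a b : ℤ_[p]ˣ, ψ (a * b) = ψ a + ψ b) ∧
        ψ (ω * (r : ℤ_[p]ˣ) ^ (p ^ n)) = y) ↔ (p : ℤ_[p]) ^ n ∣ y) ∧
    Nonempty ((ℤ_[p] ⧸ Ideal.span {(p : ℤ_[p]) ^ n}) ≃+ ZMod (p ^ n)) :=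
  stmt10_general p ω hω₁ hω₂ n r hr
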